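/- arXiv:2409.01337 — 9 statements merged into one kernel-verified Lean document; each statement's English description precedes it below -/
import Mathlib

section
/- For λ₁, λ₂ > 0 and j ∈ ℝ, the infimum over pairs (q⁺, q⁻) of nonnegative reals with q⁺ - q⁻ = j of Ψ(q⁺, λ₁) + Ψ(q⁻, λ₂) equals j·log( j/(2√(λ₁λ₂)) + √(j²/(4λ₁λ₂) + 1) ) − j·log √(λ₁/λ₂) − √(j² + 4λ₁λ₂) + λ₁ + λ₂, where Ψ(a,b) = a·log(a/b) + b − a for a,b > 0, Ψ(0,b) = b for b ≥ 0. -/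
open EReal

noncomputable def Psi (a b : ℝ) : EReal :=
  if 0 < a ∧ 0 < b then ((a * Real.log (a / b) + b - a : ℝ) : EReal)
  else if a = 0 ∧ 0 ≤ b then ((b : ℝ) : EReal)
  else ⊤

lemma psi_eq_aux (a l : ℝ) (ha : 0 ≤ a) (hl : 0 < l) :
    Psi a l = ((if a = 0 then l else a * Real.log (a / l) + l - a : ℝ) : EReal) := by
  rcases eq_or_lt_of_le ha with h | h
  · simp [Psi, ← h, hl.le, lt_irrefl]
  · simp [Psi, h, hl, h.ne']

lemma tangent_aux (a l q : ℝ) (ha : 0 ≤ a) (hl : 0 < l) (hq : 0 < q) :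
    Real.log (q / l) * a + l - q ≤ (if a = 0 then l else a * Real.log (a / l) + l - a) := by
  rcases eq_or_lt_of_le ha with h | h
  · rw [if_pos h.symm, ← h]; linarith
  · rw [if_neg h.ne']
    have h3 : Real.log (a / l) = Real.log (a / q) + Real.log (q / l) := by
      rw [Real.log_div h.ne' hl.ne', Real.log_div h.ne' hq.ne', Real.log_div hq.ne' hl.ne']
      ring
    have hlog := Real.log_le_sub_one_of_pos (show 0 < q / a from div_pos hq h)
    have h5 : Real.log (q / a) = -Real.log (a / q) := by
      rw [← Real.log_inv]; congr 1; field_simp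
    have h4 : a * Real.log (q / a) ≤ a * (q / a - 1) := mul_le_mul_of_nonneg_left hlog h.le
    have h6 : a * (q / a - 1) = q - a := by field_simp
    rw [h5] at h4
    have key : a - q ≤ a * Real.log (a / q) := by nlinarith
    rw [h3]
    nlinarith

theorem psi_contraction (l1 l2 j : ℝ) (h1 : 0 < l1) (h2 : 0 < l2) :
    (⨅ (q : {p : ℝ × ℝ // 0 ≤ p.1 ∧ 0 ≤ p.2 ∧ p.1 - p.2 = j}),
        Psi q.1.1 l1 + Psi q.1.2 l2)
      = ((j * Real.log (j / (2 * Real.sqrt (l1 * l2))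
            + Real.sqrt (j^2 / (4 * l1 * l2) + 1))
          - j * Real.log (Real.sqrt (l1 / l2))
          - Real.sqrt (j^2 + 4 * l1 * l2) + l1 + l2 : ℝ) : EReal) := by
  set s := Real.sqrt (j^2 + 4*l1*l2) with hs_def
  have hsq : s^2 = j^2 + 4*l1*l2 := Real.sq_sqrt (by positivity)
  have hs0 : 0 < s := Real.sqrt_pos.mpr (by positivity)
  have habs : |j| < s := by
    rw [← Real.sqrt_sq_eq_abs, hs_def]
    apply Real.sqrt_lt_sqrt (sq_nonneg j); nlinarith
  obtain ⟨hjs1, hjs2⟩ := abs_lt.mp habs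
  set qp : ℝ := (j + s)/2 with hqp_def
  set qm : ℝ := (s - j)/2 with hqm_def
  have hqp : 0 < qp := by rw [hqp_def]; linarith
  have hqm : 0 < qm := by rw [hqm_def]; linarith
  have hdiff : qp - qm = j := by rw [hqp_def, hqm_def]; ring
  have hsum' : qp + qm = s := by rw [hqp_def, hqm_def]; ring
  have hprod : qp * qm = l1 * l2 := by
    have h' : qp * qm = (s^2 - j^2)/4 := by rw [hqp_def, hqm_def]; ring
    rw [h', hsq]; ring
  set c := Real.log (qp / l1) with hc_def
  have hc2 : Real.log (qm / l2) = -c := by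
    have heq : qm / l2 = (qp / l1)⁻¹ := by
      rw [inv_div]
      rw [div_eq_div_iff h2.ne' hqp.ne']
      linear_combination hprod
    rw [heq, Real.log_inv]
  set V : ℝ := j * c + l1 + l2 - s with hV_def
  -- rewrite RHS of goal to V
  have hr : 0 < Real.sqrt (l1*l2) := Real.sqrt_pos.mpr (by positivity)
  have hrsq : (Real.sqrt (l1*l2))^2 = l1*l2 := Real.sq_sqrt (by positivity)
  have hsqrt1 : Real.sqrt (j^2/(4*l1*l2) + 1) = s / (2*Real.sqrt (l1*l2)) := by
    have h2r : (2*Real.sqrt (l1*l2))^2 = 4*(l1*l2) := by rw [mul_pow, hrsq]; norm_num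
    rw [show j^2/(4*l1*l2)+1 = (s/(2*Real.sqrt (l1*l2)))^2 by
      rw [div_pow, hsq, h2r]; field_simp]
    exact Real.sqrt_sq (by positivity)
  have hRHS : (j * Real.log (j / (2 * Real.sqrt (l1 * l2))
            + Real.sqrt (j^2 / (4 * l1 * l2) + 1))
          - j * Real.log (Real.sqrt (l1 / l2)) - s + l1 + l2) = V := by
    rw [hsqrt1, show j / (2*Real.sqrt (l1*l2)) + s/(2*Real.sqrt (l1*l2))
        = qp / Real.sqrt (l1*l2) by rw [hqp_def]; field_simp]
    have hlog1 : Real.log (qp / Real.sqrt (l1*l2))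
        = Real.log qp - (Real.log l1 + Real.log l2)/2 := by
      rw [Real.log_div hqp.ne' hr.ne', Real.log_sqrt (by positivity),
        Real.log_mul h1.ne' h2.ne']
    have hlog2 : Real.log (Real.sqrt (l1/l2)) = (Real.log l1 - Real.log l2)/2 := by
      rw [Real.log_sqrt (by positivity), Real.log_div h1.ne' h2.ne']
    have hc' : c = Real.log qp - Real.log l1 := by
      rw [hc_def, Real.log_div hqp.ne' h1.ne']
    rw [hlog1, hlog2, hV_def, hc']; ring
  rw [hRHS]
  -- now prove iInf = (V : EReal)
  apply le_antisymm
  · apply iInf_le_of_le ⟨(qp, qm), hqp.le, hqm.le, hdiff⟩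
    apply le_of_eq
    rw [psi_eq_aux qp l1 hqp.le h1, psi_eq_aux qm l2 hqm.le h2,
      if_neg hqp.ne', if_neg hqm.ne', ← EReal.coe_add]
    norm_cast
    rw [hc2, hV_def, ← hc_def]
    linear_combination c * hdiff + hsum'
  · apply le_iInf
    rintro ⟨⟨a, b⟩, ha, hb, hab⟩
    simp only
    rw [psi_eq_aux a l1 ha h1, psi_eq_aux b l2 hb h2, ← EReal.coe_add,
      EReal.coe_le_coe_iff]
    have t1 := tangent_aux a l1 qp ha h1 hqp
    have t2 := tangent_aux b l2 qm hb h2 hqm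
    rw [hc2] at t2
    rw [← hc_def] at t1
    have hkey : V = (c * a + l1 - qp) + (-c * b + l2 - qm) := by
      rw [hV_def]; linear_combination (-c) * hab - hsum'
    linarith
end

section
/- For each fixed j ∈ ℝ, the function (λ₁, λ₂) ↦ Γ_{λ₁,λ₂}(j) is jointly convex on (0,∞)². -/
noncomputable def Gamma (l1 l2 j : ℝ) : ℝ :=
  j * Real.arsinh (j / (2 * Real.sqrt (l1 * l2)))
    - (j / 2) * Real.log (l1 / l2)
    - Real.sqrt (j^2 + 4 * l1 * l2) + l1 + l2

namespace GammaAux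

noncomputable def θstar (l1 l2 j : ℝ) : ℝ :=
  Real.arsinh (j / (2 * Real.sqrt (l1 * l2))) - Real.log (l1 / l2) / 2

lemma sqrt_exp (x : ℝ) : Real.sqrt (Real.exp x) = Real.exp (x / 2) := by
  rw [show Real.exp x = (Real.exp (x/2))^2 by
    rw [sq, ← Real.exp_add]; ring_nf]
  exact Real.sqrt_sq (Real.exp_pos _).le

lemma key1 (j l1 l2 : ℝ) (h1 : 0 < l1) (h2 : 0 < l2) :
    l1 * Real.exp (θstar l1 l2 j) = (j + Real.sqrt (j^2 + 4*l1*l2)) / 2 := by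
  have hs : 0 < Real.sqrt (l1 * l2) := Real.sqrt_pos.mpr (mul_pos h1 h2)
  have hs2 : Real.sqrt (l1*l2) ^ 2 = l1 * l2 := Real.sq_sqrt (mul_pos h1 h2).le
  have hA : Real.sqrt (1 + (j / (2 * Real.sqrt (l1*l2)))^2)
      = Real.sqrt (j^2 + 4*l1*l2) / (2 * Real.sqrt (l1*l2)) := by
    rw [eq_div_iff (by positivity), ← Real.sqrt_sq (by positivity : (0:ℝ) ≤ 2 * Real.sqrt (l1*l2)),
      ← Real.sqrt_mul (by positivity)]
    congr 1
    have e1 : Real.sqrt l1 ^ 2 = l1 := Real.sq_sqrt h1.le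
    have e2 : Real.sqrt l2 ^ 2 = l2 := Real.sq_sqrt h2.le
    field_simp
    have hT : Real.sqrt (2 ^ 2 * Real.sqrt (l1 * l2) ^ 2) ^ 2 = 2 ^ 2 * Real.sqrt (l1 * l2) ^ 2 :=
      Real.sq_sqrt (by positivity)
    rw [hT, hs2]; ring
  have hB : Real.exp (- (Real.log (l1/l2) / 2)) = Real.sqrt (l2 / l1) := by
    rw [neg_div' , ← sqrt_exp, Real.exp_neg, Real.exp_log (by positivity), inv_div]
  have hC : l1 * Real.sqrt (l2 / l1) = Real.sqrt (l1 * l2) := by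
    rw [show l1 * l2 = l1^2 * (l2 / l1) by field_simp,
      Real.sqrt_mul (sq_nonneg l1), Real.sqrt_sq h1.le]
  rw [θstar, sub_eq_add_neg, Real.exp_add, Real.exp_arsinh, hA, hB]
  rw [show l1 * ((j / (2 * Real.sqrt (l1*l2)) + Real.sqrt (j^2+4*l1*l2) / (2 * Real.sqrt (l1*l2))) * Real.sqrt (l2/l1))
      = (j + Real.sqrt (j^2+4*l1*l2)) * (l1 * Real.sqrt (l2/l1)) / (2 * Real.sqrt (l1*l2)) by field_simp, hC]
  field_simp

lemma key2 (j l1 l2 : ℝ) (h1 : 0 < l1) (h2 : 0 < l2) :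
    l2 * Real.exp (-(θstar l1 l2 j)) = (Real.sqrt (j^2 + 4*l1*l2) - j) / 2 := by
  have hS2 : Real.sqrt (j^2 + 4*l1*l2) ^ 2 = j^2 + 4*l1*l2 :=
    Real.sq_sqrt (by nlinarith)
  have hSj : |j| < Real.sqrt (j^2 + 4*l1*l2) := by
    rw [← Real.sqrt_sq_eq_abs]
    exact Real.sqrt_lt_sqrt (sq_nonneg j) (by nlinarith)
  have hjS : 0 < j + Real.sqrt (j^2 + 4*l1*l2) := by
    have := abs_lt.mp hSj
    linarith [this.1]
  have h := key1 j l1 l2 h1 h2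
  have hprod : (l1 * Real.exp (θstar l1 l2 j)) * (l2 * Real.exp (-(θstar l1 l2 j)))
      = l1 * l2 := by
    rw [show l1 * Real.exp (θstar l1 l2 j) * (l2 * Real.exp (-(θstar l1 l2 j)))
        = l1 * l2 * (Real.exp (θstar l1 l2 j) * Real.exp (-(θstar l1 l2 j))) by ring,
      ← Real.exp_add, add_neg_cancel, Real.exp_zero, mul_one]
  rw [h] at hprod
  have hne : (j + Real.sqrt (j^2 + 4*l1*l2)) / 2 ≠ 0 := by positivity
  field_simp at hprod ⊢
  nlinarith [hprod, hS2]

lemma gamma_eq (j l1 l2 : ℝ) (h1 : 0 < l1) (h2 : 0 < l2) :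
    Gamma l1 l2 j = j * θstar l1 l2 j - l1 * (Real.exp (θstar l1 l2 j) - 1)
      - l2 * (Real.exp (-(θstar l1 l2 j)) - 1) := by
  rw [Gamma, θstar]
  have h1' := key1 j l1 l2 h1 h2
  have h2' := key2 j l1 l2 h1 h2
  rw [θstar] at h1' h2'
  linarith [h1', h2']

lemma affine_le (j l1 l2 θ : ℝ) (h1 : 0 < l1) (h2 : 0 < l2) :
    j * θ - l1 * (Real.exp θ - 1) - l2 * (Real.exp (-θ) - 1) ≤ Gamma l1 l2 j := by
  rw [gamma_eq j l1 l2 h1 h2]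
  set t := θstar l1 l2 j with ht
  have e1 : l1 * Real.exp t - l2 * Real.exp (-t) = j := by
    rw [key1 j l1 l2 h1 h2, key2 j l1 l2 h1 h2]; ring
  have hexp1 : Real.exp θ = Real.exp t * Real.exp (θ - t) := by
    rw [← Real.exp_add]; ring_nf
  have hexp2 : Real.exp (-θ) = Real.exp (-t) * Real.exp (t - θ) := by
    rw [← Real.exp_add]; ring_nf
  have hle1 : θ - t + 1 ≤ Real.exp (θ - t) := Real.add_one_le_exp _
  have hle2 : t - θ + 1 ≤ Real.exp (t - θ) := Real.add_one_le_exp _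
  have hp1 : 0 < l1 * Real.exp t := by positivity
  have hp2 : 0 < l2 * Real.exp (-t) := by positivity
  have A := mul_le_mul_of_nonneg_left hle1 hp1.le
  have B := mul_le_mul_of_nonneg_left hle2 hp2.le
  rw [hexp1, hexp2, ← e1]
  nlinarith [A, B]

end GammaAux

theorem gamma_jointly_convex (j : ℝ) :
    ConvexOn ℝ (Set.Ioi (0:ℝ) ×ˢ Set.Ioi (0:ℝ))
      (fun p : ℝ × ℝ => Gamma p.1 p.2 j) := by
  constructor
  · exact (convex_Ioi 0).prod (convex_Ioi 0)
  · rintro ⟨p1, p2⟩ ⟨hp1, hp2⟩ ⟨q1, q2⟩ ⟨hq1, hq2⟩ a b ha hb hab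
    simp only [Set.mem_Ioi] at hp1 hp2 hq1 hq2
    simp only [Prod.smul_mk, Prod.mk_add_mk, smul_eq_mul]
    have hb' : b = 1 - a := by linarith
    have hl1 : 0 < a * p1 + b * q1 := by
      rcases ha.lt_or_eq with h | h
      · nlinarith [mul_nonneg hb hq1.le]
      · rw [← h] at hb' ⊢; simp [hb']; linarith
    have hl2 : 0 < a * p2 + b * q2 := by
      rcases ha.lt_or_eq with h | h
      · nlinarith [mul_nonneg hb hq2.le]
      · rw [← h] at hb' ⊢; simp [hb']; linarith
    set θ := GammaAux.θstar (a * p1 + b * q1) (a * p2 + b * q2) j with hθ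
    calc Gamma (a * p1 + b * q1) (a * p2 + b * q2) j
        = j * θ - (a * p1 + b * q1) * (Real.exp θ - 1)
          - (a * p2 + b * q2) * (Real.exp (-θ) - 1) :=
          GammaAux.gamma_eq j _ _ hl1 hl2
      _ = a * (j * θ - p1 * (Real.exp θ - 1) - p2 * (Real.exp (-θ) - 1))
          + b * (j * θ - q1 * (Real.exp θ - 1) - q2 * (Real.exp (-θ) - 1)) := by
          rw [hb']; ring
      _ ≤ a * Gamma p1 p2 j + b * Gamma q1 q2 j :=
          add_le_add
            (mul_le_mul_of_nonneg_left (GammaAux.affine_le j p1 p2 θ hp1 hp2) ha)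
            (mul_le_mul_of_nonneg_left (GammaAux.affine_le j q1 q2 θ hq1 hq2) hb)
end

section
/- For each fixed λ₁, λ₂ > 0, the function j ↦ Γ_{λ₁,λ₂}(j) is convex on ℝ, nonnegative, and vanishes exactly at j = λ₁ − λ₂. -/
lemma gamma_sqrt_eq {l1 l2 : ℝ} (h1 : 0 < l1) (h2 : 0 < l2) (j : ℝ) :
    Real.sqrt (j^2 + 4 * l1 * l2)
      = (2 * Real.sqrt (l1 * l2)) * Real.sqrt (1 + (j / (2 * Real.sqrt (l1 * l2)))^2) := by
  have hl : 0 < l1 * l2 := mul_pos h1 h2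
  have hs : 0 < Real.sqrt (l1 * l2) := Real.sqrt_pos.2 hl
  set c : ℝ := 2 * Real.sqrt (l1 * l2) with hc_def
  have hc : 0 < c := by positivity
  have hc2 : c ^ 2 = 4 * l1 * l2 := by
    rw [hc_def, mul_pow, Real.sq_sqrt hl.le]; ring
  rw [← Real.sqrt_sq hc.le, ← Real.sqrt_mul (sq_nonneg c)]
  congr 1
  field_simp
  rw [Real.sq_sqrt (sq_nonneg c), hc2]; ring

lemma gamma_hasDerivAt {l1 l2 : ℝ} (h1 : 0 < l1) (h2 : 0 < l2) (j : ℝ) :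
    HasDerivAt (Gamma l1 l2)
      (Real.arsinh (j / (2 * Real.sqrt (l1 * l2))) - Real.log (l1 / l2) / 2) j := by
  have hl : 0 < l1 * l2 := mul_pos h1 h2
  have hs : 0 < Real.sqrt (l1 * l2) := Real.sqrt_pos.2 hl
  set c : ℝ := 2 * Real.sqrt (l1 * l2) with hc_def
  have hc : 0 < c := by positivity
  have hpos : 0 < j ^ 2 + 4 * l1 * l2 := by nlinarith [sq_nonneg j]
  have h1' : HasDerivAt (fun x : ℝ => x / c) (1 / c) j := by
    simpa using (hasDerivAt_id j).div_const c
  have h2' : HasDerivAt (fun x : ℝ => Real.arsinh (x / c))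
      ((Real.sqrt (1 + (j / c) ^ 2))⁻¹ * (1 / c)) j :=
    (Real.hasDerivAt_arsinh _).comp j h1'
  have h3' : HasDerivAt (fun x : ℝ => x * Real.arsinh (x / c))
      (1 * Real.arsinh (j / c) + j * ((Real.sqrt (1 + (j / c) ^ 2))⁻¹ * (1 / c))) j :=
    (hasDerivAt_id j).mul h2'
  have h4' : HasDerivAt (fun x : ℝ => x ^ 2 + 4 * l1 * l2) (2 * j) j := by
    simpa using (hasDerivAt_pow 2 j).add_const (4 * l1 * l2)
  have h5' : HasDerivAt (fun x : ℝ => Real.sqrt (x ^ 2 + 4 * l1 * l2))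
      (2 * j / (2 * Real.sqrt (j ^ 2 + 4 * l1 * l2))) j := h4'.sqrt (ne_of_gt hpos)
  have h6' : HasDerivAt (fun x : ℝ => x / 2 * Real.log (l1 / l2))
      (1 / 2 * Real.log (l1 / l2)) j := by
    simpa using ((hasDerivAt_id j).div_const 2).mul_const (Real.log (l1 / l2))
  have hcomb := (((h3'.sub h6').sub h5').add_const l1).add_const l2
  have hfun : (fun x : ℝ => x * Real.arsinh (x / c) - x / 2 * Real.log (l1 / l2)
      - Real.sqrt (x ^ 2 + 4 * l1 * l2) + l1 + l2) = Gamma l1 l2 := by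
    funext x
    simp only [Gamma, hc_def]
  simp only [Pi.sub_apply] at hcomb; rw [hfun] at hcomb
  refine hcomb.congr_deriv ?_
  have hsq := gamma_sqrt_eq h1 h2 j
  rw [← hc_def] at hsq
  have hs1 : 0 < Real.sqrt (1 + (j / c) ^ 2) := Real.sqrt_pos.2 (by positivity)
  rw [hsq]
  field_simp
  ring

lemma gamma_arsinh_key {l1 l2 : ℝ} (h1 : 0 < l1) (h2 : 0 < l2) :
    Real.arsinh ((l1 - l2) / (2 * Real.sqrt (l1 * l2))) = Real.log (l1 / l2) / 2 := by
  have hs1 : 0 < Real.sqrt l1 := Real.sqrt_pos.2 h1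
  have hs2 : 0 < Real.sqrt l2 := Real.sqrt_pos.2 h2
  have key : (l1 - l2) / (2 * Real.sqrt (l1 * l2)) = Real.sinh (Real.log (l1 / l2) / 2) := by
    rw [Real.sinh_eq]
    have e1 : Real.exp (Real.log (l1 / l2) / 2) = Real.sqrt (l1 / l2) := by
      rw [← Real.log_sqrt (by positivity), Real.exp_log (by positivity)]
    have e2 : Real.exp (-(Real.log (l1 / l2) / 2)) = Real.sqrt (l2 / l1) := by
      have heq : -(Real.log (l1 / l2) / 2) = Real.log (l2 / l1) / 2 := by
        rw [Real.log_div h1.ne' h2.ne', Real.log_div h2.ne' h1.ne']; ring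
      rw [heq, ← Real.log_sqrt (by positivity), Real.exp_log (by positivity)]
    rw [e1, e2, Real.sqrt_div' l1 h2.le, Real.sqrt_div' l2 h1.le,
      Real.sqrt_mul h1.le]
    have q1 : Real.sqrt l1 ^ 2 = l1 := Real.sq_sqrt h1.le
    have q2 : Real.sqrt l2 ^ 2 = l2 := Real.sq_sqrt h2.le
    field_simp
    rw [q1, q2]
  rw [key, Real.arsinh_sinh]

theorem gamma_convex_nonneg_zero (l1 l2 : ℝ) (h1 : 0 < l1) (h2 : 0 < l2) :
    ConvexOn ℝ Set.univ (fun j => Gamma l1 l2 j)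
      ∧ (∀ j, 0 ≤ Gamma l1 l2 j)
      ∧ (∀ j, Gamma l1 l2 j = 0 ↔ j = l1 - l2) := by
  have hl : 0 < l1 * l2 := mul_pos h1 h2
  have hs : 0 < Real.sqrt (l1 * l2) := Real.sqrt_pos.2 hl
  set c : ℝ := 2 * Real.sqrt (l1 * l2) with hc_def
  have hc : 0 < c := by positivity
  have hd : ∀ j, HasDerivAt (Gamma l1 l2)
      (Real.arsinh (j / c) - Real.log (l1 / l2) / 2) j := fun j => gamma_hasDerivAt h1 h2 j
  have hdiff : Differentiable ℝ (Gamma l1 l2) := fun j => (hd j).differentiableAt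
  have hderiv : ∀ j, deriv (Gamma l1 l2) j = Real.arsinh (j / c) - Real.log (l1 / l2) / 2 :=
    fun j => (hd j).deriv
  have hmono : StrictMono (deriv (Gamma l1 l2)) := by
    intro a b hab
    rw [hderiv a, hderiv b]
    have : a / c < b / c := by gcongr
    exact sub_lt_sub_right (Real.arsinh_lt_arsinh.2 this) _
  have hconv : StrictConvexOn ℝ Set.univ (Gamma l1 l2) :=
    StrictMono.strictConvexOn_univ_of_deriv hdiff.continuous hmono
  -- value at the minimizer
  have hkey : Real.arsinh ((l1 - l2) / c) = Real.log (l1 / l2) / 2 := gamma_arsinh_key h1 h2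
  have hzero : Gamma l1 l2 (l1 - l2) = 0 := by
    have hsq : Real.sqrt ((l1 - l2) ^ 2 + 4 * l1 * l2) = l1 + l2 := by
      rw [show (l1 - l2) ^ 2 + 4 * l1 * l2 = (l1 + l2) ^ 2 by ring]
      exact Real.sqrt_sq (by positivity)
    simp only [Gamma, ← hc_def, hkey, hsq]
    ring
  have hd0 : deriv (Gamma l1 l2) (l1 - l2) = 0 := by
    rw [hderiv, hkey]; ring
  -- strict positivity away from the minimizer
  have hpos : ∀ j, j ≠ l1 - l2 → 0 < Gamma l1 l2 j := by
    intro j hj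
    rcases lt_or_gt_of_ne hj with hlt | hgt
    · -- j < l1 - l2 : Gamma strictly anti on [j, l1-l2]
      have hanti : StrictAntiOn (Gamma l1 l2) (Set.Icc j (l1 - l2)) := by
        apply strictAntiOn_of_deriv_neg (convex_Icc _ _) (hdiff.continuous.continuousOn)
        intro x hx
        rw [interior_Icc] at hx
        rw [hderiv]
        have h' : Real.arsinh (x / c) < Real.arsinh ((l1 - l2) / c) :=
          Real.arsinh_lt_arsinh.2 (by gcongr; exact hx.2)
        linarith [hkey]
      have := hanti (Set.left_mem_Icc.2 hlt.le) (Set.right_mem_Icc.2 hlt.le) hlt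
      rw [hzero] at this
      linarith
    · have hmono' : StrictMonoOn (Gamma l1 l2) (Set.Icc (l1 - l2) j) := by
        apply strictMonoOn_of_deriv_pos (convex_Icc _ _) (hdiff.continuous.continuousOn)
        intro x hx
        rw [interior_Icc] at hx
        rw [hderiv]
        have h' : Real.arsinh ((l1 - l2) / c) < Real.arsinh (x / c) :=
          Real.arsinh_lt_arsinh.2 (by gcongr; exact hx.1)
        linarith [hkey]
      have := hmono' (Set.left_mem_Icc.2 hgt.le) (Set.right_mem_Icc.2 hgt.le) hgt
      rw [hzero] at this
      linarith
  refine ⟨hconv.convexOn, ?_, ?_⟩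
  · intro j
    by_cases hj : j = l1 - l2
    · rw [hj, hzero]
    · exact (hpos j hj).le
  · intro j
    constructor
    · intro h0
      by_contra hj
      exact absurd h0 (ne_of_gt (hpos j hj))
    · intro hj; rw [hj, hzero]
end

section
/- For j ∈ ℝ and λ₁, λ₂, μ₁, μ₂ > 0, the infimum over pairs (j₁, j₂) with j₁ + j₂ = j of Γ_{λ₁,λ₂}(j₁) + Γ_{μ₁,μ₂}(j₂) equals Γ_{λ₁+μ₁, λ₂+μ₂}(j). -/
lemma sinh_rep (l1 l2 θ : ℝ) (h1 : 0 < l1) (h2 : 0 < l2) :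
    2 * Real.sqrt (l1 * l2) * Real.sinh (θ + Real.log (l1 / l2) / 2)
      = l1 * Real.exp θ - l2 * Real.exp (-θ) := by
  have ha : 0 < Real.sqrt l1 := Real.sqrt_pos.2 h1
  have hb : 0 < Real.sqrt l2 := Real.sqrt_pos.2 h2
  have hc : Real.log (l1 / l2) / 2 = Real.log (Real.sqrt l1) - Real.log (Real.sqrt l2) := by
    rw [Real.log_sqrt h1.le, Real.log_sqrt h2.le, Real.log_div h1.ne' h2.ne']; ring
  have hexp : Real.exp (Real.log (l1 / l2) / 2) = Real.sqrt l1 / Real.sqrt l2 := by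
    rw [hc, Real.exp_sub, Real.exp_log ha, Real.exp_log hb]
  have hexp' : Real.exp (-(Real.log (l1 / l2) / 2)) = Real.sqrt l2 / Real.sqrt l1 := by
    rw [Real.exp_neg, hexp]
    field_simp
  have s1 : Real.sqrt l1 ^ 2 = l1 := Real.sq_sqrt h1.le
  have s2 : Real.sqrt l2 ^ 2 = l2 := Real.sq_sqrt h2.le
  rw [Real.sqrt_mul h1.le, Real.sinh_eq, Real.exp_add, neg_add, Real.exp_add, hexp, hexp']
  field_simp
  linear_combination (Real.exp θ) * s1
    - (Real.exp (-θ)) * s2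

lemma GammaA (l1 l2 θ : ℝ) (h1 : 0 < l1) (h2 : 0 < l2) :
    Gamma l1 l2 (l1 * Real.exp θ - l2 * Real.exp (-θ))
      = (l1 * Real.exp θ - l2 * Real.exp (-θ)) * θ
        - l1 * (Real.exp θ - 1) - l2 * (Real.exp (-θ) - 1) := by
  set j := l1 * Real.exp θ - l2 * Real.exp (-θ) with hjdef
  have hs : (0:ℝ) < Real.sqrt (l1 * l2) := Real.sqrt_pos.2 (by positivity)
  have harg : j / (2 * Real.sqrt (l1 * l2)) = Real.sinh (θ + Real.log (l1 / l2) / 2) := by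
    rw [hjdef, ← sinh_rep l1 l2 θ h1 h2]
    field_simp
  have hasinh : Real.arsinh (j / (2 * Real.sqrt (l1 * l2))) = θ + Real.log (l1 / l2) / 2 := by
    rw [harg, Real.arsinh_sinh]
  have he : Real.exp θ * Real.exp (-θ) = 1 := by
    rw [← Real.exp_add]; simp
  have hsq : j ^ 2 + 4 * l1 * l2 = (l1 * Real.exp θ + l2 * Real.exp (-θ)) ^ 2 := by
    rw [hjdef]; nlinarith [he]
  have hsqrt : Real.sqrt (j ^ 2 + 4 * l1 * l2) = l1 * Real.exp θ + l2 * Real.exp (-θ) := by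
    rw [hsq, Real.sqrt_sq (by positivity)]
  unfold Gamma
  rw [hasinh, hsqrt]; ring

lemma rep (l1 l2 j : ℝ) (h1 : 0 < l1) (h2 : 0 < l2) :
    l1 * Real.exp (Real.arsinh (j / (2 * Real.sqrt (l1 * l2))) - Real.log (l1 / l2) / 2)
      - l2 * Real.exp (-(Real.arsinh (j / (2 * Real.sqrt (l1 * l2))) - Real.log (l1 / l2) / 2))
      = j := by
  have hs : (0:ℝ) < Real.sqrt (l1 * l2) := Real.sqrt_pos.2 (by positivity)
  rw [← sinh_rep l1 l2 _ h1 h2, sub_add_cancel, Real.sinh_arsinh]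
  field_simp

lemma GammaB (l1 l2 j θ : ℝ) (h1 : 0 < l1) (h2 : 0 < l2) :
    j * θ - l1 * (Real.exp θ - 1) - l2 * (Real.exp (-θ) - 1) ≤ Gamma l1 l2 j := by
  set t := Real.arsinh (j / (2 * Real.sqrt (l1 * l2))) - Real.log (l1 / l2) / 2 with ht
  have hj : j = l1 * Real.exp t - l2 * Real.exp (-t) := (rep l1 l2 j h1 h2).symm
  have hG : Gamma l1 l2 j
      = j * t - l1 * (Real.exp t - 1) - l2 * (Real.exp (-t) - 1) := by
    rw [hj]; exact GammaA l1 l2 t h1 h2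
  rw [hG, hj]
  have hu : Real.exp θ = Real.exp t * Real.exp (θ - t) := by
    rw [← Real.exp_add]; ring_nf
  have hv : Real.exp (-θ) = Real.exp (-t) * Real.exp (t - θ) := by
    rw [← Real.exp_add]; ring_nf
  rw [hu, hv]
  have p1 : 0 ≤ l1 * Real.exp t * (Real.exp (θ - t) - (θ - t) - 1) := by
    have := Real.add_one_le_exp (θ - t)
    have hp : (0:ℝ) < l1 * Real.exp t := by positivity
    nlinarith
  have p2 : 0 ≤ l2 * Real.exp (-t) * (Real.exp (t - θ) - (t - θ) - 1) := by
    have := Real.add_one_le_exp (t - θ)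
    have hp : (0:ℝ) < l2 * Real.exp (-t) := by positivity
    nlinarith
  nlinarith [p1, p2]

theorem parallel_rule (j l1 l2 m1 m2 : ℝ)
    (h1 : 0 < l1) (h2 : 0 < l2) (h3 : 0 < m1) (h4 : 0 < m2) :
    sInf {r : ℝ | ∃ j1 j2 : ℝ, j1 + j2 = j ∧ r = Gamma l1 l2 j1 + Gamma m1 m2 j2}
      = Gamma (l1 + m1) (l2 + m2) j := by
  have h1' : 0 < l1 + m1 := by linarith
  have h2' : 0 < l2 + m2 := by linarith
  set T := Real.arsinh (j / (2 * Real.sqrt ((l1 + m1) * (l2 + m2))))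
      - Real.log ((l1 + m1) / (l2 + m2)) / 2 with hT
  have hj : j = (l1 + m1) * Real.exp T - (l2 + m2) * Real.exp (-T) :=
    (rep (l1 + m1) (l2 + m2) j h1' h2').symm
  set j1 := l1 * Real.exp T - l2 * Real.exp (-T) with hj1
  set j2 := m1 * Real.exp T - m2 * Real.exp (-T) with hj2
  have hsum : j1 + j2 = j := by rw [hj, hj1, hj2]; ring
  have hGtot : Gamma (l1 + m1) (l2 + m2) j
      = j * T - (l1 + m1) * (Real.exp T - 1) - (l2 + m2) * (Real.exp (-T) - 1) := by
    rw [hj]; exact GammaA (l1 + m1) (l2 + m2) T h1' h2'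
  have hval : Gamma l1 l2 j1 + Gamma m1 m2 j2 = Gamma (l1 + m1) (l2 + m2) j := by
    rw [hj1, hj2, GammaA l1 l2 T h1 h2, GammaA m1 m2 T h3 h4, hGtot, hj]; ring
  have hlb : ∀ r ∈ {r : ℝ | ∃ j1 j2 : ℝ, j1 + j2 = j ∧ r = Gamma l1 l2 j1 + Gamma m1 m2 j2},
      Gamma (l1 + m1) (l2 + m2) j ≤ r := by
    rintro r ⟨a, b, hab, rfl⟩
    calc Gamma (l1 + m1) (l2 + m2) j
        = (a * T - l1 * (Real.exp T - 1) - l2 * (Real.exp (-T) - 1))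
          + (b * T - m1 * (Real.exp T - 1) - m2 * (Real.exp (-T) - 1)) := by
          rw [hGtot, ← hab]; ring
      _ ≤ Gamma l1 l2 a + Gamma m1 m2 b :=
          add_le_add (GammaB l1 l2 a T h1 h2) (GammaB m1 m2 b T h3 h4)
  apply le_antisymm
  · exact csInf_le ⟨Gamma (l1 + m1) (l2 + m2) j, hlb⟩ ⟨j1, j2, hsum, hval.symm⟩
  · exact le_csInf ⟨Gamma l1 l2 j1 + Gamma m1 m2 j2, j1, j2, hsum, rfl⟩ hlb
end

section
/- If φ satisfies the critical condition 2(a+b)φ = √(j² + 4λaφ) + √(j² + 4bφμ) with a,b,φ,λ,μ > 0, then j·arcsinh( j/(2√(λaφ)) ) + j·arcsinh( j/(2√(bφμ)) ) = j·arcsinh( j·(a+b)/(2√(abλμ)) ). -/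
theorem arcsinh_critical (a b lam mu φ j : ℝ)
    (ha : 0 < a) (hb : 0 < b) (hlam : 0 < lam) (hmu : 0 < mu) (hφ : 0 < φ)
    (hcrit : 2 * (a + b) * φ
      = Real.sqrt (j^2 + 4 * lam * a * φ) + Real.sqrt (j^2 + 4 * b * φ * mu)) :
    j * Real.arsinh (j / (2 * Real.sqrt (lam * a * φ)))
      + j * Real.arsinh (j / (2 * Real.sqrt (b * φ * mu)))
    = j * Real.arsinh (j * (a + b) / (2 * Real.sqrt (a * b * lam * mu))) := by
  have hA : (0:ℝ) < Real.sqrt (lam * a * φ) := Real.sqrt_pos.2 (by positivity)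
  have hB : (0:ℝ) < Real.sqrt (b * φ * mu) := Real.sqrt_pos.2 (by positivity)
  have hS : (0:ℝ) < Real.sqrt (a * b * lam * mu) := Real.sqrt_pos.2 (by positivity)
  set A := Real.sqrt (lam * a * φ) with hAdef
  set B := Real.sqrt (b * φ * mu) with hBdef
  set S := Real.sqrt (a * b * lam * mu) with hSdef
  have hA2 : A ^ 2 = lam * a * φ := Real.sq_sqrt (by positivity)
  have hB2 : B ^ 2 = b * φ * mu := Real.sq_sqrt (by positivity)
  have hS2 : S ^ 2 = a * b * lam * mu := Real.sq_sqrt (by positivity)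
  have hAB : A * B = S * φ := by
    have h1 : (A * B) ^ 2 = (S * φ) ^ 2 := by
      rw [mul_pow, mul_pow, hA2, hB2, hS2]; ring
    rw [← Real.sqrt_sq (by positivity : (0:ℝ) ≤ A * B), h1,
      Real.sqrt_sq (by positivity)]
  have hP : Real.sqrt (j ^ 2 + 4 * lam * a * φ)
      = 2 * A * Real.sqrt (1 + (j / (2 * A)) ^ 2) := by
    rw [show (2:ℝ) * A * Real.sqrt (1 + (j / (2 * A)) ^ 2)
      = Real.sqrt ((2 * A) ^ 2) * Real.sqrt (1 + (j / (2 * A)) ^ 2) by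
        rw [Real.sqrt_sq (by positivity)],
      ← Real.sqrt_mul (by positivity)]
    congr 1
    field_simp
    nlinarith [hA2]
  have hQ : Real.sqrt (j ^ 2 + 4 * b * φ * mu)
      = 2 * B * Real.sqrt (1 + (j / (2 * B)) ^ 2) := by
    rw [show (2:ℝ) * B * Real.sqrt (1 + (j / (2 * B)) ^ 2)
      = Real.sqrt ((2 * B) ^ 2) * Real.sqrt (1 + (j / (2 * B)) ^ 2) by
        rw [Real.sqrt_sq (by positivity)],
      ← Real.sqrt_mul (by positivity)]
    congr 1
    field_simp
    nlinarith [hB2]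
  have key : Real.arsinh (j / (2 * A)) + Real.arsinh (j / (2 * B))
      = Real.arsinh (j * (a + b) / (2 * S)) := by
    apply Real.sinh_injective
    rw [Real.sinh_add, Real.sinh_arsinh, Real.sinh_arsinh, Real.sinh_arsinh,
      Real.cosh_arsinh, Real.cosh_arsinh]
    rw [hP, hQ] at hcrit
    set u := Real.sqrt (1 + (j / (2 * A)) ^ 2) with hu
    set v := Real.sqrt (1 + (j / (2 * B)) ^ 2) with hv
    -- goal: j/(2A) * v + u * (j/(2B)) = j*(a+b)/(2S)
    have hABne : A * B ≠ 0 := by positivity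
    field_simp
    linear_combination (-S * j / 2) * hcrit - j * (a + b) * hAB
  rw [← key]
  ring
end

section
/- If φ > 0 satisfies 2(a+b)φ = √(j² + 4λaφ) + √(j² + 4bφμ) with a,b,λ,μ > 0, then −√(j² + 4λaφ) + λ + aφ − √(j² + 4μbφ) + μ + bφ = −√(j² + 4abλμ/(a+b)²) + bλ/(a+b) + aμ/(a+b). -/
/-!
Write `u, v` for the two square roots, `S = a + b`, `A = λa`, `B = bμ`. Then `u + v = 2Sφ` and
`u² - v² = 4(A - B)φ`, so `u - v = 2(A - B)/S` and both roots are determined. Substituting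
`u = Sφ + (A - B)/S` into `u² = j² + 4Aφ` gives `j² + 4AB/S² = (Sφ - (A + B)/S)²`, and the base is
nonnegative because `(u + v)² ≥ u² + v²`. Both sides of the claim then equal `λ + μ - Sφ`.
-/

section SqrtPair

variable {u v c A B S φ : ℝ}

theorem sub_eq_of_add_eq_of_sq_eq (hS : S ≠ 0) (hφ : φ ≠ 0)
    (hu : u ^ 2 = c + 4 * A * φ) (hv : v ^ 2 = c + 4 * B * φ) (hsum : u + v = 2 * S * φ) :
    u - v = 2 * (A - B) / S := by
  have hprod : (u - v) * S * φ = 2 * (A - B) * φ := by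
    linear_combination (1 / 2 : ℝ) * (hu - hv) - (1 / 2 : ℝ) * (u - v) * hsum
  rw [eq_div_iff hS]
  exact mul_right_cancel₀ hφ hprod

theorem add_le_sq_mul_of_add_eq (hc : 0 ≤ c) (hφ : 0 < φ) (hu0 : 0 ≤ u) (hv0 : 0 ≤ v)
    (hu : u ^ 2 = c + 4 * A * φ) (hv : v ^ 2 = c + 4 * B * φ) (hsum : u + v = 2 * S * φ) :
    A + B ≤ S ^ 2 * φ := by
  have hsq : 4 * ((A + B) * φ) ≤ 4 * (S ^ 2 * φ * φ) := by
    calc 4 * ((A + B) * φ) ≤ u ^ 2 + v ^ 2 + 2 * u * v := by nlinarith [mul_nonneg hu0 hv0]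
      _ = (u + v) ^ 2 := by ring
      _ = 4 * (S ^ 2 * φ * φ) := by rw [hsum]; ring
  exact le_of_mul_le_mul_right (by linarith) hφ

theorem sqrt_add_mul_div_sq_eq_of_add_eq (hc : 0 ≤ c) (hS : 0 < S) (hφ : 0 < φ)
    (hu0 : 0 ≤ u) (hv0 : 0 ≤ v)
    (hu : u ^ 2 = c + 4 * A * φ) (hv : v ^ 2 = c + 4 * B * φ) (hsum : u + v = 2 * S * φ) :
    Real.sqrt (c + 4 * A * B / S ^ 2) = S * φ - (A + B) / S := by
  have hdiff := sub_eq_of_add_eq_of_sq_eq hS.ne' hφ.ne' hu hv hsum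
  have hu_eq : u = S * φ + (A - B) / S := by linear_combination (hsum + hdiff) / 2
  have hsq : c + 4 * A * B / S ^ 2 = (S * φ - (A + B) / S) ^ 2 := by
    rw [show c = u ^ 2 - 4 * A * φ by linarith, hu_eq]
    field_simp
    ring
  have hbase : 0 ≤ S * φ - (A + B) / S := by
    rw [sub_nonneg, div_le_iff₀ hS]
    nlinarith [add_le_sq_mul_of_add_eq hc hφ hu0 hv0 hu hv hsum]
  rw [hsq, Real.sqrt_sq hbase]

end SqrtPair

theorem sqrt_terms_critical (a b lam mu φ j : ℝ)
    (ha : 0 < a) (hb : 0 < b) (hlam : 0 < lam) (hmu : 0 < mu) (hφ : 0 < φ)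
    (hcrit : 2 * (a + b) * φ
      = Real.sqrt (j^2 + 4 * lam * a * φ) + Real.sqrt (j^2 + 4 * b * φ * mu)) :
    -Real.sqrt (j^2 + 4 * lam * a * φ) + lam + a * φ
      - Real.sqrt (j^2 + 4 * mu * b * φ) + mu + b * φ
    = -Real.sqrt (j^2 + 4 * a * b * lam * mu / (a + b)^2)
        + b * lam / (a + b) + a * mu / (a + b) := by
  have hS : 0 < a + b := add_pos ha hb
  have hroot := sqrt_add_mul_div_sq_eq_of_add_eq (A := lam * a) (B := b * mu)
    (sq_nonneg j) hS hφ (Real.sqrt_nonneg _) (Real.sqrt_nonneg _)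
    (by rw [Real.sq_sqrt (by positivity)]; ring) (by rw [Real.sq_sqrt (by positivity)]; ring)
    hcrit.symm
  rw [show 4 * a * b * lam * mu = 4 * (lam * a) * (b * mu) by ring, hroot,
    show 4 * mu * b * φ = 4 * b * φ * mu by ring]
  have hweights : (lam * a + b * mu) / (a + b) + b * lam / (a + b) + a * mu / (a + b) = lam + mu := by
    field_simp
    ring
  linear_combination hcrit - hweights
end

section
/- Let λ_L, λ_R > 0, N ≥ 1, and j ∈ ℝ. The sequence φ_x = A + Bx + Cx² with A = λ_L, B = (−2λ_L + √((N+1)²j² + 4λ_Lλ_R))/(N+1), C = (λ_L + λ_R − √((N+1)²j² + 4λ_Lλ_R))/(N+1)² satisfies φ_0 = λ_L, φ_{N+1} = λ_R, φ_x ≥ 0 for 0 ≤ x ≤ N+1, and 4φ_x = √(j² + 4φ_{x−1}φ_x) + √(j² + 4φ_xφ_{x+1}) for x = 1, …, N. -/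
/-!
For a quadratic `q t = A + B t + C t²` one has the identity
`discrim C B A + 4 q(t) q(t+1) = (q(t) + q(t+1) - C)²`, and the second difference of `q` is `2C`.
So as soon as `q(t-1) + q(t) - C` and `q(t) + q(t+1) - C` are nonnegative, the two square roots
add up to `q(t-1) + 2 q(t) + q(t+1) - 2C = 4 q(t)`. The coefficients of the theorem make
`discrim C B A = j²`, and with `L = N + 1` and `S = √(L² j² + 4 λ_L λ_R)` they give the
Bernstein-type form `L² q(t) = λ_L (L - t)² + λ_R t² + S t (L - t)`, from which the boundary
values and all the required nonnegativity on `[0, L]` can be read off.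
-/

def quadEval {R : Type*} [CommRing R] (A B C t : R) : R := A + B * t + C * t ^ 2

section Quadratic

variable {R : Type*} [CommRing R] (A B C t : R)

theorem discrim_add_four_mul_quadEval_mul_quadEval_add_one :
    discrim C B A + 4 * quadEval A B C t * quadEval A B C (t + 1)
      = (quadEval A B C t + quadEval A B C (t + 1) - C) ^ 2 := by
  unfold discrim quadEval; ring

theorem quadEval_sub_one_add_quadEval_add_one :
    quadEval A B C (t - 1) + quadEval A B C (t + 1) = 2 * quadEval A B C t + 2 * C := by
  unfold quadEval; ring

end Quadratic

theorem four_mul_quadEval_eq_sqrt_add_sqrt {A B C t : ℝ}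
    (hprev : 0 ≤ quadEval A B C (t - 1) + quadEval A B C t - C)
    (hnext : 0 ≤ quadEval A B C t + quadEval A B C (t + 1) - C) :
    4 * quadEval A B C t
      = √(discrim C B A + 4 * quadEval A B C (t - 1) * quadEval A B C t)
        + √(discrim C B A + 4 * quadEval A B C t * quadEval A B C (t + 1)) := by
  have hprev_sq := discrim_add_four_mul_quadEval_mul_quadEval_add_one A B C (t - 1)
  rw [sub_add_cancel] at hprev_sq
  rw [hprev_sq, discrim_add_four_mul_quadEval_mul_quadEval_add_one, Real.sqrt_sq hprev,
    Real.sqrt_sq hnext]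
  linarith [quadEval_sub_one_add_quadEval_add_one A B C t]

section BoundaryProfile

variable {lamL lamR S L : ℝ}

theorem sq_mul_quadEval_boundaryProfile (hL : L ≠ 0) (t : ℝ) :
    L ^ 2 * quadEval lamL ((-2 * lamL + S) / L) ((lamL + lamR - S) / L ^ 2) t
      = lamL * (L - t) ^ 2 + lamR * t ^ 2 + S * t * (L - t) := by
  unfold quadEval; field_simp; ring

theorem quadEval_boundaryProfile_self (hL : L ≠ 0) :
    quadEval lamL ((-2 * lamL + S) / L) ((lamL + lamR - S) / L ^ 2) L = lamR := by
  unfold quadEval; field_simp; ring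

theorem discrim_boundaryProfile (hL : L ≠ 0) :
    discrim ((lamL + lamR - S) / L ^ 2) ((-2 * lamL + S) / L) lamL
      = (S ^ 2 - 4 * lamL * lamR) / L ^ 2 := by
  unfold discrim; field_simp; ring

theorem quadEval_boundaryProfile_nonneg (hL : 0 < L) (hlamL : 0 ≤ lamL) (hlamR : 0 ≤ lamR)
    (hS : 0 ≤ S) {t : ℝ} (ht₀ : 0 ≤ t) (htL : t ≤ L) :
    0 ≤ quadEval lamL ((-2 * lamL + S) / L) ((lamL + lamR - S) / L ^ 2) t := by
  have hsq := sq_mul_quadEval_boundaryProfile (lamL := lamL) (lamR := lamR) (S := S) hL.ne' t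
  have hcross : 0 ≤ S * t * (L - t) := mul_nonneg (mul_nonneg hS ht₀) (sub_nonneg.2 htL)
  refine (mul_nonneg_iff_of_pos_left (pow_pos hL 2)).1 ?_
  rw [hsq]
  positivity

theorem quadEval_boundaryProfile_add_sub_nonneg (hL : 0 < L) (hlamL : 0 ≤ lamL)
    (hlamR : 0 ≤ lamR) (hS : 0 ≤ S) {t : ℝ} (ht₀ : 0 ≤ t) (htL : t + 1 ≤ L) :
    0 ≤ quadEval lamL ((-2 * lamL + S) / L) ((lamL + lamR - S) / L ^ 2) t
      + quadEval lamL ((-2 * lamL + S) / L) ((lamL + lamR - S) / L ^ 2) (t + 1)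
      - (lamL + lamR - S) / L ^ 2 := by
  have key : L ^ 2 * (quadEval lamL ((-2 * lamL + S) / L) ((lamL + lamR - S) / L ^ 2) t
      + quadEval lamL ((-2 * lamL + S) / L) ((lamL + lamR - S) / L ^ 2) (t + 1)
      - (lamL + lamR - S) / L ^ 2)
      = 2 * lamL * (L - t) * (L - 1 - t) + 2 * lamR * t * (t + 1)
        + S * (2 * t * (L - 1 - t) + L) := by
    unfold quadEval; field_simp; ring
  have h₁ : 0 ≤ 2 * lamL * (L - t) * (L - 1 - t) := by
    apply mul_nonneg (mul_nonneg _ _) <;> linarith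
  have h₂ : 0 ≤ 2 * lamR * t * (t + 1) := by positivity
  have h₃ : 0 ≤ S * (2 * t * (L - 1 - t) + L) := by
    apply mul_nonneg hS
    nlinarith
  refine (mul_nonneg_iff_of_pos_left (pow_pos hL 2)).1 ?_
  rw [key]
  linarith

end BoundaryProfile

theorem quadratic_solution_general (lamL lamR : ℝ) (hL : 0 < lamL) (hR : 0 < lamR)
    (N : ℕ) (j : ℝ) (A B C : ℝ)
    (hA : A = lamL)
    (hB : B = (-2 * lamL + Real.sqrt ((N + 1)^2 * j^2 + 4 * lamL * lamR)) / (N + 1))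
    (hC : C = (lamL + lamR - Real.sqrt ((N + 1)^2 * j^2 + 4 * lamL * lamR)) / (N + 1)^2)
    (φ : ℕ → ℝ) (hφ : ∀ x : ℕ, φ x = A + B * x + C * x^2) :
    φ 0 = lamL ∧ φ (N + 1) = lamR
      ∧ (∀ x : ℕ, x ≤ N + 1 → 0 ≤ φ x)
      ∧ (∀ x : ℕ, 1 ≤ x → x ≤ N →
          4 * φ x = Real.sqrt (j^2 + 4 * φ (x - 1) * φ x)
            + Real.sqrt (j^2 + 4 * φ x * φ (x + 1))) := by
  set L : ℝ := N + 1 with hLdef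
  set S := √(L ^ 2 * j ^ 2 + 4 * lamL * lamR)
  have hLpos : 0 < L := by positivity
  have hS : 0 ≤ S := Real.sqrt_nonneg _
  have hφq : ∀ x : ℕ, φ x = quadEval A B C x := hφ
  have hD : discrim C B A = j ^ 2 := by
    rw [hA, hB, hC, discrim_boundaryProfile hLpos.ne', Real.sq_sqrt (by positivity)]
    field_simp; ring
  subst A B C
  refine ⟨by simp [hφq, quadEval], ?_, fun x hx => ?_, fun x hx₁ hxN => ?_⟩
  · rw [hφq, Nat.cast_succ]
    exact quadEval_boundaryProfile_self hLpos.ne'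
  · rw [hφq]
    exact quadEval_boundaryProfile_nonneg hLpos hL.le hR.le hS (Nat.cast_nonneg x)
      (by rw [hLdef]; exact_mod_cast hx)
  · have hxR : (1 : ℝ) ≤ x ∧ (x : ℝ) ≤ N :=
      ⟨by exact_mod_cast hx₁, by exact_mod_cast hxN⟩
    have hprev := quadEval_boundaryProfile_add_sub_nonneg hLpos hL.le hR.le hS
      (sub_nonneg.2 hxR.1) (t := (x : ℝ) - 1) (by linarith)
    have hnext := quadEval_boundaryProfile_add_sub_nonneg hLpos hL.le hR.le hS
      (Nat.cast_nonneg x) (by linarith)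
    rw [sub_add_cancel] at hprev
    rw [hφq, hφq, hφq, Nat.cast_sub hx₁, Nat.cast_add, Nat.cast_one, ← hD]
    exact four_mul_quadEval_eq_sqrt_add_sqrt hprev hnext

theorem quadratic_solution (lamL lamR : ℝ) (hL : 0 < lamL) (hR : 0 < lamR)
    (N : ℕ) (hN : 1 ≤ N) (j : ℝ) (A B C : ℝ)
    (hA : A = lamL)
    (hB : B = (-2 * lamL + Real.sqrt ((N + 1)^2 * j^2 + 4 * lamL * lamR)) / (N + 1))
    (hC : C = (lamL + lamR - Real.sqrt ((N + 1)^2 * j^2 + 4 * lamL * lamR)) / (N + 1)^2)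
    (φ : ℕ → ℝ) (hφ : ∀ x : ℕ, φ x = A + B * x + C * x^2) :
    φ 0 = lamL ∧ φ (N + 1) = lamR
      ∧ (∀ x : ℕ, x ≤ N + 1 → 0 ≤ φ x)
      ∧ (∀ x : ℕ, 1 ≤ x → x ≤ N →
          4 * φ x = Real.sqrt (j^2 + 4 * φ (x - 1) * φ x)
            + Real.sqrt (j^2 + 4 * φ x * φ (x + 1))) :=
  quadratic_solution_general lamL lamR hL hR N j A B C hA hB hC φ hφ
end

section
/- For positive reals c¹_L, c¹_R, c²_L, c²_R with c¹_R + c²_L > 0, and λ_L, λ_R > 0, j ∈ ℝ: inf over φ > 0 of [ Γ_{λ_L c¹_L, φ c¹_R}(j) + Γ_{φ c²_L, λ_R c²_R}(j) ] = Γ_{λ_L c¹_Lc²_L/(c¹_R+c²_L), λ_R c²_Rc¹_R/(c¹_R+c²_L)}(j). (Series reduction of two non-reversible electrical components.) -/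
lemma gamma_eq (l1 l2 j : ℝ) (h1 : 0 < l1) (h2 : 0 < l2) :
    Gamma l1 l2 j = j * Real.log ((Real.sqrt (j^2 + 4*l1*l2) + j) / (2*l1))
      - Real.sqrt (j^2 + 4*l1*l2) + l1 + l2 := by
  have hll : 0 < l1 * l2 := mul_pos h1 h2
  set D := Real.sqrt (j^2 + 4*l1*l2) with hD
  have hDsq : D^2 = j^2 + 4*l1*l2 := Real.sq_sqrt (by positivity)
  have hDj : |j| < D := by
    have h : |j| = Real.sqrt (j^2) := (Real.sqrt_sq_eq_abs j).symm
    rw [h]; exact Real.sqrt_lt_sqrt (by positivity) (by nlinarith)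
  obtain ⟨hj1, hj2⟩ := abs_lt.1 hDj
  have hDjpos : 0 < D + j := by linarith
  have hm : Real.sqrt (l1*l2) = Real.sqrt l1 * Real.sqrt l2 := Real.sqrt_mul h1.le _
  have hs1 : 0 < Real.sqrt l1 := Real.sqrt_pos.2 h1
  have hs2 : 0 < Real.sqrt l2 := Real.sqrt_pos.2 h2
  have hs1sq : Real.sqrt l1 * Real.sqrt l1 = l1 := Real.mul_self_sqrt h1.le
  have hs2sq : Real.sqrt l2 * Real.sqrt l2 = l2 := Real.mul_self_sqrt h2.le
  have key : Real.arsinh (j / (2 * Real.sqrt (l1 * l2)))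
      - (1/2) * Real.log (l1 / l2) = Real.log ((D + j) / (2*l1)) := by
    have h1x : (1:ℝ) + (j / (2 * Real.sqrt (l1*l2)))^2
        = (j^2 + 4*l1*l2) / (2 * Real.sqrt (l1*l2))^2 := by
      field_simp
      nlinarith [hs1sq, hs2sq, Real.sq_sqrt hll.le]
    have hsq : Real.sqrt ((1:ℝ) + (j / (2 * Real.sqrt (l1*l2)))^2)
        = D / (2 * Real.sqrt (l1*l2)) := by
      rw [h1x, Real.sqrt_div (by positivity), Real.sqrt_sq (by positivity)]
    have harsinh : Real.arsinh (j / (2 * Real.sqrt (l1*l2)))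
        = Real.log ((D + j) / (2 * Real.sqrt (l1*l2))) := by
      simp only [Real.arsinh, hsq]
      congr 1
      field_simp
      ring
    rw [harsinh, hm]
    rw [Real.log_div hDjpos.ne' (by positivity),
      Real.log_div hDjpos.ne' (by positivity),
      Real.log_mul two_ne_zero (by positivity),
      Real.log_mul two_ne_zero (by positivity),
      Real.log_mul hs1.ne' hs2.ne',
      Real.log_sqrt h1.le, Real.log_sqrt h2.le,
      Real.log_div h1.ne' h2.ne']
    ring
  show j * Real.arsinh (j / (2 * Real.sqrt (l1 * l2))) - (j/2) * Real.log (l1/l2)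
      - D + l1 + l2 = _
  linear_combination j * key

lemma tangent_le (l1 l2 j t : ℝ) (h1 : 0 < l1) (h2 : 0 < l2) (ht : 0 < t) :
    j * Real.log t - l1 * (t - 1) - l2 * (1/t - 1) ≤ Gamma l1 l2 j := by
  rw [gamma_eq l1 l2 j h1 h2]
  set D := Real.sqrt (j^2 + 4*l1*l2) with hD
  have hDsq : D^2 = j^2 + 4*l1*l2 := Real.sq_sqrt (by positivity)
  have hDj : |j| < D := by
    have h : |j| = Real.sqrt (j^2) := (Real.sqrt_sq_eq_abs j).symm
    rw [h]; exact Real.sqrt_lt_sqrt (by positivity) (by nlinarith [mul_pos h1 h2])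
  obtain ⟨hj1, hj2⟩ := abs_lt.1 hDj
  have hDjpos : 0 < D + j := by linarith
  have hDjneg : 0 < D - j := by linarith
  set ts := (D + j) / (2*l1) with hts
  have htspos : 0 < ts := by apply div_pos <;> linarith
  set u := t / ts with hu
  have hupos : 0 < u := div_pos ht htspos
  have hlogu1 : Real.log u ≤ u - 1 := Real.log_le_sub_one_of_pos hupos
  have hlogu2 : -Real.log u ≤ 1/u - 1 := by
    have := Real.log_le_sub_one_of_pos (show (0:ℝ) < 1/u by positivity)
    rw [one_div, Real.log_inv] at this
    rw [one_div]
    linarith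
  have hlt : Real.log t = Real.log u + Real.log ts := by
    rw [hu, Real.log_div ht.ne' htspos.ne']; ring
  have ht1 : l1 * t = (D+j)/2 * u := by
    rw [hu, hts]; field_simp
  have ht2 : l2 * (1/t) = (D-j)/2 * (1/u) := by
    rw [hu, hts]
    have h4 : (D+j) * (D-j) = 4*l1*l2 := by nlinarith
    rw [one_div_div]
    field_simp
    nlinarith [h4]
  have hmain : j * Real.log u - l1 * t - l2 * (1/t) + D ≤ 0 := by
    rw [ht1, ht2]
    have e1 : (D+j)/2 * (Real.log u - u + 1) ≤ 0 := by
      apply mul_nonpos_of_nonneg_of_nonpos (by linarith) (by linarith)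
    have e2 : (D-j)/2 * (-Real.log u - 1/u + 1) ≤ 0 := by
      apply mul_nonpos_of_nonneg_of_nonpos (by linarith) (by linarith)
    nlinarith [e1, e2]
  have hexp : l2 * (1/t - 1) = l2 * (1/t) - l2 := by ring
  nlinarith [hmain, hlt]

theorem series_reduction (c1L c1R c2L c2R lamL lamR j : ℝ)
    (h1L : 0 < c1L) (h1R : 0 < c1R) (h2L : 0 < c2L) (h2R : 0 < c2R)
    (hsum : 0 < c1R + c2L) (hL : 0 < lamL) (hR : 0 < lamR) :
    sInf {r : ℝ | ∃ φ : ℝ, 0 < φ ∧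
        r = Gamma (lamL * c1L) (φ * c1R) j + Gamma (φ * c2L) (lamR * c2R) j}
      = Gamma (lamL * (c1L * c2L / (c1R + c2L))) (lamR * (c2R * c1R / (c1R + c2L))) j := by
  have hs : (0:ℝ) < c1R + c2L := hsum
  set s := c1R + c2L with hs_def
  have ha : 0 < lamL * c1L := mul_pos hL h1L
  have hb : 0 < lamR * c2R := mul_pos hR h2R
  set a := lamL * c1L with ha_def
  set b := lamR * c2R with hb_def
  -- reduce goal to a statement about a, b, c1R, c2L, s only
  have hgoal1 : lamL * (c1L * c2L / s) = a * c2L / s := by rw [ha_def]; ring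
  have hgoal2 : lamR * (c2R * c1R / s) = b * c1R / s := by rw [hb_def]; ring
  rw [hgoal1, hgoal2]
  have hsum2 : s = c1R + c2L := hs_def
  clear_value s a b
  -- abbreviations
  obtain ⟨A, hA_def⟩ : ∃ x : ℝ, x = a * c1R := ⟨_, rfl⟩
  obtain ⟨B, hB_def⟩ : ∃ x : ℝ, x = c2L * b := ⟨_, rfl⟩
  have hA : 0 < A := hA_def ▸ mul_pos ha h1R
  have hB : 0 < B := hB_def ▸ mul_pos h2L hb
  obtain ⟨D, hD_def⟩ : ∃ x : ℝ, x = Real.sqrt (s^2*j^2 + 4*(A*B)) := ⟨_, rfl⟩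
  have hDsq : D^2 = s^2*j^2 + 4*(A*B) := by rw [hD_def]; exact Real.sq_sqrt (by positivity)
  have hDpos : 0 < D := by rw [hD_def]; exact Real.sqrt_pos.2 (by positivity)
  have habs : |s*j| < D := by
    rw [hD_def, ← Real.sqrt_sq_eq_abs]
    exact Real.sqrt_lt_sqrt (sq_nonneg _) (by nlinarith)
  obtain ⟨hsj1, hsj2⟩ := abs_lt.1 habs
  obtain ⟨φ, hφ_def⟩ : ∃ x : ℝ, x = (A + B + D)/s^2 := ⟨_, rfl⟩
  have hφ : 0 < φ := by rw [hφ_def]; exact div_pos (by linarith) (by positivity)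
  obtain ⟨D1, hD1_def⟩ : ∃ x : ℝ, x = (D + 2*A)/s := ⟨_, rfl⟩
  obtain ⟨D2, hD2_def⟩ : ∃ x : ℝ, x = (D + 2*B)/s := ⟨_, rfl⟩
  have hD1pos : 0 < D1 := by rw [hD1_def]; exact div_pos (by linarith) hs
  have hD2pos : 0 < D2 := by rw [hD2_def]; exact div_pos (by linarith) hs
  have eD1p : D1 + j = (D + 2*A + s*j)/s := by rw [hD1_def]; field_simp; try ring
  have eD1m : D1 - j = (D + 2*A - s*j)/s := by rw [hD1_def]; field_simp; try ring
  have eD2p : D2 + j = (D + 2*B + s*j)/s := by rw [hD2_def]; field_simp; try ring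
  have eD2m : D2 - j = (D + 2*B - s*j)/s := by rw [hD2_def]; field_simp; try ring
  have hD1j : 0 < D1 + j := by rw [eD1p]; exact div_pos (by linarith) hs
  have hD1j' : 0 < D1 - j := by rw [eD1m]; exact div_pos (by linarith) hs
  have hD2j : 0 < D2 + j := by rw [eD2p]; exact div_pos (by linarith) hs
  have hD2j' : 0 < D2 - j := by rw [eD2m]; exact div_pos (by linarith) hs
  have hD1sq : (D1 + j) * (D1 - j) = 4*A*φ := by
    rw [eD1p, eD1m, hφ_def]
    field_simp
    linear_combination hDsq
  have hD2sq : (D2 + j) * (D2 - j) = 4*B*φ := by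
    rw [eD2p, eD2m, hφ_def]
    field_simp
    linear_combination hDsq
  have hD1D2 : D1 + D2 = 2*s*φ := by
    rw [hD1_def, hD2_def, hφ_def]; field_simp; ring
  obtain ⟨t1, ht1_def⟩ : ∃ x : ℝ, x = (D1 + j)/(2*a) := ⟨_, rfl⟩
  obtain ⟨t2, ht2_def⟩ : ∃ x : ℝ, x = (D2 + j)/(2*(φ*c2L)) := ⟨_, rfl⟩
  have ht1 : 0 < t1 := by rw [ht1_def]; exact div_pos hD1j (by linarith)
  have ht2 : 0 < t2 := by
    rw [ht2_def]; exact div_pos hD2j (by positivity)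
  -- effective sqrt
  have heffsqrt : Real.sqrt (j^2 + 4*(a * c2L / s)*(b * c1R / s)) = D/s := by
    rw [show j^2 + 4*(a * c2L / s)*(b * c1R / s) = (D/s)^2 from by
      rw [div_pow, hDsq, hA_def, hB_def]; field_simp]
    exact Real.sqrt_sq (by positivity)
  have hsqrt1 : ∀ x : ℝ, Real.sqrt (j^2 + 4*a*(x*c1R)) = Real.sqrt (j^2 + 4*a*(x*c1R)) := fun _ => rfl
  have hsqrtφ1 : Real.sqrt (j^2 + 4*a*(φ*c1R)) = D1 := by
    rw [show j^2 + 4*a*(φ*c1R) = D1^2 from by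
      rw [hD1_def, hφ_def, div_pow, hA_def]
      field_simp
      linear_combination (-1 : ℝ) * hDsq + 4*B*hA_def.symm]
    exact Real.sqrt_sq hD1pos.le
  have hsqrtφ2 : Real.sqrt (j^2 + 4*(φ*c2L)*b) = D2 := by
    rw [show j^2 + 4*(φ*c2L)*b = D2^2 from by
      rw [hD2_def, hφ_def, div_pow, hB_def]
      field_simp
      linear_combination (-1 : ℝ) * hDsq + 4*A*hB_def.symm]
    exact Real.sqrt_sq hD2pos.le
  -- Gamma value computations
  have G1 : Gamma a (φ*c1R) j = j * Real.log t1 - D1 + a + φ*c1R := by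
    rw [gamma_eq a (φ*c1R) j ha (by positivity), hsqrtφ1, ht1_def]
  have G2 : Gamma (φ*c2L) b j = j * Real.log t2 - D2 + φ*c2L + b := by
    rw [gamma_eq (φ*c2L) b j (by positivity) hb, hsqrtφ2, ht2_def]
  have Geff : Gamma (a*c2L/s) (b*c1R/s) j
      = j * Real.log ((D/s + j)/(2*(a*c2L/s))) - D/s + a*c2L/s + b*c1R/s := by
    rw [gamma_eq _ _ j (by positivity) (by positivity), heffsqrt]
  have hprod : t1 * t2 = (D/s + j)/(2*(a*c2L/s)) := by
    rw [ht1_def, ht2_def, eD1p, eD2p, hφ_def]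
    field_simp
    ring_nf
    linear_combination (-1:ℝ)*hDsq
  have hlog : Real.log ((D/s + j)/(2*(a*c2L/s))) = Real.log t1 + Real.log t2 := by
    rw [← Real.log_mul ht1.ne' ht2.ne', hprod]
  have hat1 : a * t1 = (D1+j)/2 := by rw [ht1_def]; field_simp
  have hbt2 : b * (1/t2) = (D2-j)/2 := by
    rw [ht2_def, one_div_div, mul_div_assoc']
    rw [div_eq_div_iff hD2j.ne' two_ne_zero]
    linear_combination (-1:ℝ)*hD2sq + (-4*φ)*hB_def
  have hpt1 : c1R * (1/t1) = (D1-j)/(2*φ) := by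
    rw [ht1_def, one_div_div, mul_div_assoc']
    rw [div_eq_div_iff hD1j.ne' (by positivity)]
    linear_combination (-1:ℝ)*hD1sq + (-4*φ)*hA_def
  have hqt2 : c2L * t2 = (D2+j)/(2*φ) := by rw [ht2_def]; field_simp
  have hsum0 : c1R * (1/t1) + c2L * t2 = s := by
    rw [hpt1, hqt2]
    field_simp
    linear_combination hD1D2
  have hD1s : D1 * s = D + 2*A := by rw [hD1_def]; field_simp
  have hD2s : D2 * s = D + 2*B := by rw [hD2_def]; field_simp
  have hφs : φ * s^2 = A + B + D := by rw [hφ_def]; field_simp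
  have hbt2' : 2*b = (D2-j)*t2 := by
    rw [ht2_def, mul_div_assoc', eq_div_iff (by positivity)]
    linear_combination (-1:ℝ)*hD2sq + (-4*φ)*hB_def
  have hVal : Gamma (a*c2L/s) (b*c1R/s) j
      = j*Real.log t1 + j*Real.log t2 - a*(t1-1) - b*(1/t2-1) := by
    rw [Geff, hlog]
    field_simp
    linear_combination (s*t2)*hat1 + (s/2)*hbt2' + (s*t2/2)*hD1D2 + t2*hφs
      + t2*hA_def + t2*hB_def + (-(a+b)*t2)*hsum2
  have key : ∀ x : ℝ,
      (j*Real.log t1 - a*(t1-1) - (x*c1R)*(1/t1-1))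
        + (j*Real.log t2 - (x*c2L)*(t2-1) - b*(1/t2-1))
      = Gamma (a*c2L/s) (b*c1R/s) j := by
    intro x
    linear_combination (-1:ℝ)*hVal + (-x)*hsum0 + (-x)*hsum2
  have E1 : Gamma a (φ*c1R) j + Gamma (φ*c2L) b j = Gamma (a*c2L/s) (b*c1R/s) j := by
    rw [G1, G2, hVal]
    linear_combination hat1 + hbt2 + (-1/2:ℝ)*hD1D2 + (-φ)*hsum2
  -- conclude
  have lower : ∀ r ∈ {r : ℝ | ∃ x : ℝ, 0 < x ∧
      r = Gamma a (x * c1R) j + Gamma (x * c2L) b j},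
      Gamma (a*c2L/s) (b*c1R/s) j ≤ r := by
    rintro r ⟨x, hx, rfl⟩
    have b1 := tangent_le a (x*c1R) j t1 ha (by positivity) ht1
    have b2 := tangent_le (x*c2L) b j t2 (by positivity) hb ht2
    have hk := key x
    linarith
  have mem : Gamma (a*c2L/s) (b*c1R/s) j ∈ {r : ℝ | ∃ x : ℝ, 0 < x ∧
      r = Gamma a (x * c1R) j + Gamma (x * c2L) b j} := ⟨φ, hφ, E1.symm⟩
  exact le_antisymm (csInf_le ⟨_, lower⟩ mem) (le_csInf ⟨_, mem⟩ lower)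
end

section
/- For j, a ∈ ℝ and λ > 0, lim_{N→∞} N²·Γ_{λ, λ + a/N}(j/N) = (j + a)²/(4λ). -/
open Filter

lemma arsinh_div_tendsto :
    Tendsto (fun x : ℝ => Real.arsinh x / x) (nhdsWithin 0 {0}ᶜ) (nhds 1) := by
  have h := (Real.hasDerivAt_arsinh 0)
  rw [hasDerivAt_iff_tendsto_slope] at h
  simp only [slope_fun_def_field, Real.arsinh_zero, sub_zero] at h
  simpa using h

theorem gamma_scaling_limit (j a lam : ℝ) (hlam : 0 < lam) :
    Tendsto (fun N : ℕ => (N : ℝ)^2 * Gamma lam (lam + a / N) (j / N)) atTop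
      (nhds ((j + a)^2 / (4 * lam))) := by
  have hN : Tendsto (fun N : ℕ => (N : ℝ)) atTop atTop := tendsto_natCast_atTop_atTop
  have hinv : Tendsto (fun N : ℕ => a / (N : ℝ)) atTop (nhds 0) :=
    tendsto_const_nhds.div_atTop hN
  have hlam2 : Tendsto (fun N : ℕ => lam + a / N) atTop (nhds lam) := by
    simpa using tendsto_const_nhds.add hinv
  have hev2 : ∀ᶠ N : ℕ in atTop, lam / 2 < lam + a / N :=
    hlam2.eventually (eventually_gt_nhds (by linarith))
  have hevN : ∀ᶠ N : ℕ in atTop, 0 < (N : ℝ) := by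
    filter_upwards [eventually_ge_atTop 1] with N hN1
    exact_mod_cast Nat.lt_of_lt_of_le Nat.zero_lt_one hN1
  -- sqrt limit
  have hsq : Tendsto (fun N : ℕ => Real.sqrt (lam * (lam + a / N))) atTop (nhds lam) := by
    have := (Real.continuous_sqrt.tendsto (lam * lam)).comp (tendsto_const_nhds.mul hlam2)
    simpa [Function.comp_def, Real.sqrt_mul_self hlam.le] using this
  set S : ℕ → ℝ := fun N => Real.sqrt (lam * (lam + a / N)) with hS
  set u : ℕ → ℝ := fun N => (j / N) / (2 * S N) with hu
  -- T1
  have hT1 : Tendsto (fun N : ℕ => (N : ℝ) * j * Real.arsinh (u N)) atTop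
      (nhds (j ^ 2 / (2 * lam))) := by
    rcases eq_or_ne j 0 with hj | hj
    · simp [hj, hu]
    · have huz : Tendsto u atTop (nhdsWithin 0 {0}ᶜ) := by
        rw [tendsto_nhdsWithin_iff]
        constructor
        · have : Tendsto (fun N : ℕ => (j / N) / (2 * S N)) atTop (nhds (0 / (2 * lam))) :=
            (tendsto_const_nhds.div_atTop hN).div (tendsto_const_nhds.mul hsq)
              (by positivity)
          simpa [hu] using this
        · filter_upwards [hev2, hevN] with N h2 hNp
          have hSpos : 0 < S N := Real.sqrt_pos.2 (by nlinarith)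
          have : u N ≠ 0 := by
            simp only [hu]
            exact div_ne_zero (div_ne_zero hj hNp.ne') (by positivity)
          simpa using this
      have h1 : Tendsto (fun N : ℕ => Real.arsinh (u N) / u N) atTop (nhds 1) :=
        arsinh_div_tendsto.comp huz
      have h2 : Tendsto (fun N : ℕ => (N : ℝ) * j * u N) atTop (nhds (j ^ 2 / (2 * lam))) := by
        rw [show j ^ 2 / (2 * lam) = j * j / (2 * lam) by ring]
        have hbase : Tendsto (fun N : ℕ => j * j / (2 * S N)) atTop
            (nhds (j * j / (2 * lam))) :=
          tendsto_const_nhds.div (tendsto_const_nhds.mul hsq) (by positivity)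
        apply Tendsto.congr' _ hbase
        filter_upwards [hevN, hev2] with N hNp h2N
        have hSpos : 0 < S N := Real.sqrt_pos.2 (by nlinarith)
        simp only [hu]
        field_simp
      have := h2.mul h1
      rw [mul_one] at this
      apply this.congr'
      filter_upwards [huz.eventually_mem self_mem_nhdsWithin] with N hmem
      have hune : u N ≠ 0 := hmem
      field_simp
  -- T2
  have hT2 : Tendsto (fun N : ℕ => (j / 2) * ((N : ℝ) * Real.log (1 + (a / lam) / N))) atTop
      (nhds (j * a / (2 * lam))) := by
    have := ((Real.tendsto_mul_log_one_add_div_atTop (a / lam)).comp hN).const_mul (j / 2)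
    have heq : (j / 2) * (a / lam) = j * a / (2 * lam) := by
      ring
    rw [heq] at this
    exact this
  -- T3
  have hT3 : Tendsto (fun N : ℕ => (a ^ 2 - j ^ 2) /
      ((2 * lam + a / N) + Real.sqrt ((j / N) ^ 2 + 4 * lam * (lam + a / N)))) atTop
      (nhds ((a ^ 2 - j ^ 2) / (4 * lam))) := by
    have hin : Tendsto (fun N : ℕ => (j / N) ^ 2 + 4 * lam * (lam + a / N)) atTop
        (nhds (4 * lam * lam)) := by
      have hj0 : Tendsto (fun N : ℕ => (j / (N : ℝ)) ^ 2) atTop (nhds 0) := by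
        have := ((tendsto_const_nhds (x := j)).div_atTop hN).pow 2
        simpa using this
      have := hj0.add ((tendsto_const_nhds (x := 4 * lam)).mul hlam2)
      simpa using this
    have hsq2 : Tendsto (fun N : ℕ => Real.sqrt ((j / N) ^ 2 + 4 * lam * (lam + a / N))) atTop
        (nhds (2 * lam)) := by
      have := (Real.continuous_sqrt.tendsto (4 * lam * lam)).comp hin
      have h4 : Real.sqrt (4 * lam * lam) = 2 * lam := by
        rw [show (4 : ℝ) * lam * lam = (2 * lam) ^ 2 by ring, Real.sqrt_sq (by linarith)]
      simpa [Function.comp_def, h4] using this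
    have hden : Tendsto (fun N : ℕ => (2 * lam + a / N) +
        Real.sqrt ((j / N) ^ 2 + 4 * lam * (lam + a / N))) atTop (nhds (4 * lam)) := by
      have h1 : Tendsto (fun N : ℕ => 2 * lam + a / N) atTop (nhds (2 * lam)) := by
        simpa using (tendsto_const_nhds (x := 2 * lam)).add hinv
      have := h1.add hsq2
      have : (2 : ℝ) * lam + 2 * lam = 4 * lam := by ring
      simpa [this] using h1.add hsq2
    exact tendsto_const_nhds.div hden (by positivity)
  -- combine
  have hsum := (hT1.add hT2).add hT3
  have hlimeq : j ^ 2 / (2 * lam) + j * a / (2 * lam) + (a ^ 2 - j ^ 2) / (4 * lam)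
      = (j + a) ^ 2 / (4 * lam) := by
    field_simp
    ring
  rw [hlimeq] at hsum
  apply hsum.congr'
  filter_upwards [hev2, hevN] with N h2 hNp
  have hlam2p : 0 < lam + a / N := by linarith
  have hSpos : 0 < S N := Real.sqrt_pos.2 (by positivity)
  have hradpos : (0:ℝ) < (j / N) ^ 2 + 4 * lam * (lam + a / N) := by positivity
  set s : ℝ := Real.sqrt ((j / N) ^ 2 + 4 * lam * (lam + a / N)) with hsdef
  have hs2 : s ^ 2 = (j / N) ^ 2 + 4 * lam * (lam + a / N) := Real.sq_sqrt hradpos.le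
  have hspos : 0 < s := Real.sqrt_pos.2 hradpos
  have hCpos : 0 < (2 * lam + a / N) + s := by
    have : 0 < 2 * lam + a / N := by linarith
    linarith
  -- term 3 identity
  have h3 : (N : ℝ) ^ 2 * (lam + (lam + a / N) - s)
      = (a ^ 2 - j ^ 2) / ((2 * lam + a / N) + s) := by
    rw [eq_div_iff hCpos.ne']
    have expand : (N : ℝ) ^ 2 * (lam + (lam + a / N) - s) * ((2 * lam + a / N) + s)
        = (N : ℝ) ^ 2 * ((2 * lam + a / N) ^ 2 - s ^ 2) := by ring
    rw [expand, hs2]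
    field_simp
    ring
  -- term 2 identity
  have hNne : (N : ℝ) ≠ 0 := hNp.ne'
  have heq1 : (1 : ℝ) + (a / lam) / N = (lam + a / N) / lam := by
    field_simp
  have hlogid : Real.log (lam / (lam + a / N)) = -Real.log (1 + (a / lam) / N) := by
    rw [heq1, Real.log_div hlam.ne' hlam2p.ne', Real.log_div hlam2p.ne' hlam.ne']
    ring
  simp only [Gamma, hu, hS]
  rw [hlogid, ← hsdef, ← h3]
  set A := Real.arsinh (j / ↑N / (2 * Real.sqrt (lam * (lam + a / ↑N)))) with hA
  set L := Real.log (1 + a / lam / ↑N) with hL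
  field_simp
  ring
end
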